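/- Let n ≥ 3 and let D_{2n} be the dihedral group of order 2n. Then for every r ≥ 1, the number of r-tuples of pairwise commuting elements in D_{2n} equals n^r + n·gcd(n,2)^{r−1}·(2^r − 1). -/

import Mathlib

/-!
Count commuting tuples by their first entry: `|Comm_{k+1}(G)| = ∑_g |Comm_k(C_G(g))|`.
In `D_{2n}` write `g = gcd(n, 2)` for the number of `i : ZMod n` with `2i = 0`. The rotation
`r i` is central when `2i = 0`; otherwise its centralizer is the rotation subgroup, abelian of
order `n`. The centralizer of a reflection `sr i` is `{r j, sr (i + j) | 2j = 0}`, abelian of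
order `2g`. Hence `f k = |Comm_k(D_{2n})|` satisfies
`f (k+1) = g f k + (n - g) n^k + n (2g)^k` with `f 0 = 1`, and the closed form follows by
induction on `k`.
-/

/-- The set of `r`-tuples of pairwise commuting elements of `G`. -/
def CommTuple (r : ℕ) (G : Type*) [Group G] : Type _ :=
  {x : Fin r → G // ∀ i j, Commute (x i) (x j)}

/-- `P r G = |Comm_r(G)| / |G|^r`. -/
noncomputable def P (r : ℕ) (G : Type*) [Group G] : ℝ :=
  (Nat.card (CommTuple r G) : ℝ) / (Nat.card G : ℝ) ^ r

open Finset Subgroup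

theorem ZMod.card_add_self_eq_zero (n : ℕ) [NeZero n] :
    Nat.card {c : ZMod n // c + c = 0} = n.gcd 2 := by
  let double : ZMod n →+ ZMod n := AddMonoidHom.mulLeft 2
  have hrange : double.range = AddSubgroup.zmultiples (2 : ZMod n) := by
    ext x
    simp only [AddMonoidHom.mem_range, AddSubgroup.mem_zmultiples_iff, double,
      AddMonoidHom.coe_mulLeft, zsmul_eq_mul]
    constructor
    · rintro ⟨c, rfl⟩
      exact ⟨c.cast, by rw [ZMod.intCast_cast, ZMod.cast_id', id, mul_comm]⟩
    · rintro ⟨k, rfl⟩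
      exact ⟨k, mul_comm _ _⟩
  have hindex : double.ker.index = n / n.gcd 2 := by
    rw [AddSubgroup.index_ker, hrange, Nat.card_zmultiples, ← Nat.cast_two (R := ZMod n),
      ZMod.addOrderOf_coe _ (NeZero.ne n)]
  have hcard := double.ker.card_mul_index
  rw [hindex, Nat.card_zmod] at hcard
  have hcongr : Nat.card {c : ZMod n // c + c = 0} = Nat.card double.ker :=
    Nat.card_congr (Equiv.subtypeEquivRight fun _ => by simp [double, two_mul])
  have hpos : 0 < n / n.gcd 2 :=
    Nat.div_pos (Nat.gcd_le_left _ (NeZero.pos n)) (Nat.gcd_pos_of_pos_left _ (NeZero.pos n))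
  rw [hcongr]
  apply Nat.eq_of_mul_eq_mul_right hpos
  rw [hcard, Nat.mul_div_cancel' (Nat.gcd_dvd_left n 2)]

theorem ZMod.card_filter_add_self_eq_zero (n : ℕ) [NeZero n] :
    #{c : ZMod n | c + c = 0} = n.gcd 2 := by
  rw [← Fintype.card_subtype, ← Nat.card_eq_fintype_card, ZMod.card_add_self_eq_zero]

namespace CommTuple

variable {G : Type*} [Group G]

instance [Finite G] (r : ℕ) : Finite (CommTuple r G) := Subtype.finite

lemma card_zero : Nat.card (CommTuple 0 G) = 1 :=
  Nat.card_eq_one_iff_unique.2 ⟨⟨fun _ _ => Subtype.ext (Subsingleton.elim _ _)⟩,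
    ⟨⟨Fin.elim0, fun i => Fin.elim0 i⟩⟩⟩

lemma card_of_commute {r : ℕ} (h : ∀ a b : G, Commute a b) :
    Nat.card (CommTuple r G) = Nat.card G ^ r := by
  rw [CommTuple, Nat.card_congr (Equiv.subtypeUnivEquiv fun (x : Fin r → G) i j => h _ _),
    Nat.card_fun, Nat.card_fin]

lemma card_subgroup_of_commute {r : ℕ} {H : Subgroup G}
    (h : ∀ a ∈ H, ∀ b ∈ H, Commute a b) :
    Nat.card (CommTuple r H) = Nat.card H ^ r :=
  card_of_commute fun a b => Subtype.ext (h a a.2 b b.2)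

def congr {H : Type*} [Group H] (e : G ≃* H) (r : ℕ) : CommTuple r G ≃ CommTuple r H :=
  Equiv.subtypeEquiv (Equiv.piCongrRight fun _ => e.toEquiv) fun x => by
    simp only [Equiv.piCongrRight_apply, MulEquiv.toEquiv_eq_coe, MulEquiv.coe_toEquiv,
      Pi.map_apply, commute_map_iff e.injective]

lemma card_of_centralizer_eq_top {r : ℕ} {g : G} (h : centralizer {g} = ⊤) :
    Nat.card (CommTuple r (centralizer {g})) = Nat.card (CommTuple r G) := by
  rw [h]; exact Nat.card_congr (congr topEquiv r)

def succEquiv (r : ℕ) :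
    CommTuple (r + 1) G ≃ Σ g : G, CommTuple r (centralizer {g}) where
  toFun x := ⟨x.1 0, ⟨fun i => ⟨x.1 i.succ, mem_centralizer_singleton_iff.2 (x.2 _ _)⟩,
    fun i j => Subtype.ext (x.2 _ _)⟩⟩
  invFun y := ⟨Fin.cons y.1 fun i => (y.2.1 i : G), by
    simp only [Fin.forall_fin_succ, Fin.cons_zero, Fin.cons_succ]
    exact ⟨⟨.refl _, fun j => (mem_centralizer_singleton_iff.1 (y.2.1 j).2).symm⟩,
      fun i => ⟨mem_centralizer_singleton_iff.1 (y.2.1 i).2,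
        fun j => congrArg Subtype.val (y.2.2 i j)⟩⟩⟩
  left_inv x := Subtype.ext (Fin.cons_self_tail x.1)
  right_inv y := rfl

lemma card_succ [Fintype G] (r : ℕ) :
    Nat.card (CommTuple (r + 1) G) = ∑ g : G, Nat.card (CommTuple r (centralizer {g})) := by
  rw [Nat.card_congr (succEquiv r), Nat.card_sigma]

end CommTuple

namespace DihedralGroup

variable {n : ℕ}

lemma r_commute_r (i j : ZMod n) : Commute (r i) (r j) := by
  simp [commute_iff_eq, add_comm]

lemma r_commute_sr_iff (i j : ZMod n) : Commute (r i) (sr j) ↔ i + i = 0 := by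
  simp only [commute_iff_eq, r_mul_sr, sr_mul_r, sr.injEq]
  constructor <;> intro h <;> linear_combination -h

lemma sr_commute_sr_iff (i j : ZMod n) : Commute (sr i) (sr j) ↔ (j - i) + (j - i) = 0 := by
  simp only [commute_iff_eq, sr_mul_sr, r.injEq]
  constructor <;> intro h <;> linear_combination h

lemma sum_univ {M : Type*} [AddCommMonoid M] [NeZero n] (f : DihedralGroup n → M) :
    ∑ g, f g = ∑ i, f (r i) + ∑ i, f (sr i) := by
  rw [← Fintype.sum_equiv equivSum.symm _ _ (fun _ => rfl), Fintype.sum_sum_type]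
  rfl

lemma card_subtype [NeZero n] (p : DihedralGroup n → Prop) :
    Nat.card {g // p g} = Nat.card {i // p (r i)} + Nat.card {i // p (sr i)} := by
  rw [← Nat.card_sum]
  exact Nat.card_congr <|
    (equivSum.subtypeEquiv (q := fun c => p (equivSum.symm c)) fun g => by cases g <;> rfl).trans
      Equiv.subtypeSum

lemma card_centralizer [NeZero n] (g : DihedralGroup n) :
    Nat.card (centralizer {g}) =
      Nat.card {i // Commute (r i) g} + Nat.card {i // Commute (sr i) g} := by
  rw [← card_subtype (fun h => Commute h g)]
  exact Nat.card_congr (Equiv.subtypeEquivRight fun _ => mem_centralizer_singleton_iff)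

lemma centralizer_r_eq_top {i : ZMod n} (hi : i + i = 0) : centralizer {r i} = ⊤ := by
  refine eq_top_iff.2 fun g _ => mem_centralizer_singleton_iff.2 ?_
  cases g with
  | r j => exact r_commute_r j i
  | sr j => exact ((r_commute_sr_iff i j).2 hi).symm

lemma card_centralizer_r [NeZero n] {i : ZMod n} (hi : i + i ≠ 0) :
    Nat.card (centralizer {r i}) = n := by
  have : IsEmpty {j // Commute (sr j) (r i)} :=
    ⟨fun ⟨j, hj⟩ => hi ((r_commute_sr_iff i j).1 hj.symm)⟩
  rw [card_centralizer, Nat.card_of_isEmpty (α := {j // Commute (sr j) (r i)}), add_zero,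
    Nat.card_congr (Equiv.subtypeUnivEquiv fun j => r_commute_r j i), Nat.card_zmod]

lemma card_centralizer_sr [NeZero n] (i : ZMod n) :
    Nat.card (centralizer {sr i}) = 2 * n.gcd 2 := by
  rw [card_centralizer, two_mul, ← ZMod.card_add_self_eq_zero n]
  congr 1
  · exact Nat.card_congr (Equiv.subtypeEquivRight fun j => r_commute_sr_iff j i)
  · exact Nat.card_congr ((Equiv.subLeft i).subtypeEquiv fun j => sr_commute_sr_iff j i)

lemma commute_of_mem_centralizer_r {i : ZMod n} (hi : i + i ≠ 0) :
    ∀ a ∈ centralizer {r i}, ∀ b ∈ centralizer {r i}, Commute a b := by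
  have rot : ∀ a ∈ centralizer {r i}, ∃ j, a = r j := by
    rintro (j | j) ha
    · exact ⟨j, rfl⟩
    · exact absurd ((r_commute_sr_iff i j).1 (mem_centralizer_singleton_iff.1 ha).symm) hi
  intro a ha b hb
  obtain ⟨j, rfl⟩ := rot a ha
  obtain ⟨k, rfl⟩ := rot b hb
  exact r_commute_r j k

lemma commute_of_mem_centralizer_sr (i : ZMod n) :
    ∀ a ∈ centralizer {sr i}, ∀ b ∈ centralizer {sr i}, Commute a b := by
  rintro (j | j) ha (k | k) hb <;>
    have ha := mem_centralizer_singleton_iff.1 ha <;>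
    have hb := mem_centralizer_singleton_iff.1 hb
  · exact r_commute_r j k
  · exact (r_commute_sr_iff j k).2 ((r_commute_sr_iff j i).1 ha)
  · exact ((r_commute_sr_iff k j).2 ((r_commute_sr_iff k i).1 hb)).symm
  · have hj := (sr_commute_sr_iff j i).1 ha
    have hk := (sr_commute_sr_iff k i).1 hb
    exact (sr_commute_sr_iff j k).2 (by linear_combination hj - hk)

lemma card_commTuple_succ [NeZero n] (k : ℕ) :
    Nat.card (CommTuple (k + 1) (DihedralGroup n)) =
      n.gcd 2 * Nat.card (CommTuple k (DihedralGroup n)) + (n - n.gcd 2) * n ^ k +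
        n * (2 * n.gcd 2) ^ k := by
  classical
  have hrot (i : ZMod n) : Nat.card (CommTuple k (centralizer {r i})) =
      if i + i = 0 then Nat.card (CommTuple k (DihedralGroup n)) else n ^ k := by
    split_ifs with hi
    · exact CommTuple.card_of_centralizer_eq_top (centralizer_r_eq_top hi)
    · rw [CommTuple.card_subgroup_of_commute (commute_of_mem_centralizer_r hi),
        card_centralizer_r hi]
  have hrefl (i : ZMod n) : Nat.card (CommTuple k (centralizer {sr i})) = (2 * n.gcd 2) ^ k := by
    rw [CommTuple.card_subgroup_of_commute (commute_of_mem_centralizer_sr i),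
      card_centralizer_sr]
  have hnot : #{i : ZMod n | ¬i + i = 0} = n - n.gcd 2 := by
    have := card_filter_add_card_filter_not (s := univ) fun i : ZMod n => i + i = 0
    rw [ZMod.card_filter_add_self_eq_zero n, card_univ, ZMod.card] at this
    omega
  simp only [CommTuple.card_succ, sum_univ, hrot, hrefl, sum_ite, sum_const, card_univ,
    ZMod.card, smul_eq_mul, ZMod.card_filter_add_self_eq_zero n, hnot]

theorem card_commTuple [NeZero n] (k : ℕ) :
    Nat.card (CommTuple k (DihedralGroup n)) = n ^ k + n * n.gcd 2 ^ (k - 1) * (2 ^ k - 1) := by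
  induction k with
  | zero => simp [CommTuple.card_zero]
  | succ k ih =>
    have hg : n.gcd 2 ≤ n := Nat.gcd_le_left _ (NeZero.pos n)
    rw [card_commTuple_succ, ih]
    rcases k with _ | k
    · norm_num; omega
    · simp only [Nat.add_sub_cancel]
      zify [hg, Nat.one_le_two_pow (n := k + 1), Nat.one_le_two_pow (n := k + 2)]
      ring

end DihedralGroup

theorem stmt16_general (n : ℕ) (hn : 3 ≤ n) (r : ℕ) :
    Nat.card (CommTuple r (DihedralGroup n)) =
      n ^ r + n * Nat.gcd n 2 ^ (r - 1) * (2 ^ r - 1) := by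
  have : NeZero n := ⟨by omega⟩
  exact DihedralGroup.card_commTuple r

theorem stmt16 (n : ℕ) (hn : 3 ≤ n) (r : ℕ) (hr : 1 ≤ r) :
    Nat.card (CommTuple r (DihedralGroup n)) =
      n ^ r + n * Nat.gcd n 2 ^ (r - 1) * (2 ^ r - 1) :=
  stmt16_general n hn r
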